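/- arXiv:1706.01055 — 2 statements merged into one kernel-verified Lean document; each statement's English description precedes it below -/
import Mathlib

section
/- Let N ≥ n ≥ 0 be integers, y an integer, and define S_x^{(k)}(w) = w^{x+1}(1−w)^k. Then, as an identity of rational functions in w, ∑_{r=0}^{N−n} (N−n)! / ( (∏_{s=0, s≠r}^{N−n} (s−r)) · S_{y−r}^{(N)}(w) ) = 1 / S_y^{(n)}(w). -/
/-!
The weight `(N-n)! / ∏_{s≠r} (s-r)` equals `(-1)^r * choose (N-n) r`, so after factoring out
`1 / S_y^{(N)}(w)` the sum is the binomial expansion of `(1-w)^(N-n)`, and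
`(1-w)^(N-n) / S_y^{(N)}(w) = 1 / S_y^{(n)}(w)`.
-/

open Finset
open scoped Nat Polynomial

section ProdSub

variable {R : Type*} [CommRing R]

lemma prod_range_natCast_sub_self (r : ℕ) :
    ∏ s ∈ range r, ((s : R) - r) = (-1) ^ r * r ! := by
  have hterm : ∀ j ∈ range r, ((r - 1 - j : ℕ) : R) - r = -1 * ((j + 1 : ℕ) : R) := by
    intro j hj
    rw [Nat.cast_sub (by simp at hj; omega), Nat.cast_sub (by simp at hj; omega)]
    push_cast
    ring
  rw [← prod_range_reflect, prod_congr rfl hterm, prod_mul_distrib, prod_const, card_range,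
    ← prod_range_add_one_eq_factorial, Nat.cast_prod]

lemma prod_Ico_natCast_sub_self (r M : ℕ) :
    ∏ s ∈ Ico (r + 1) (M + 1), ((s : R) - r) = (M - r)! := by
  rw [prod_Ico_eq_prod_range, show M + 1 - (r + 1) = M - r by omega,
    ← prod_range_add_one_eq_factorial, Nat.cast_prod]
  refine prod_congr rfl fun j _ => ?_
  push_cast
  ring

lemma prod_erase_range_natCast_sub {M r : ℕ} (hr : r ≤ M) :
    ∏ s ∈ (range (M + 1)).erase r, ((s : R) - r) = (-1) ^ r * r ! * (M - r)! := by
  have hsplit : (range (M + 1)).erase r = range r ∪ Ico (r + 1) (M + 1) := by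
    ext s; simp only [mem_erase, mem_range, mem_union, mem_Ico]; omega
  have hdisj : Disjoint (range r) (Ico (r + 1) (M + 1)) := by
    simp only [disjoint_left, mem_range, mem_Ico]; omega
  rw [hsplit, prod_union hdisj, prod_range_natCast_sub_self, prod_Ico_natCast_sub_self]

end ProdSub

lemma factorial_div_prod_erase_range_natCast_sub {K : Type*} [Field K] [CharZero K]
    {M r : ℕ} (hr : r ≤ M) :
    (M ! : K) / ∏ s ∈ (range (M + 1)).erase r, ((s : K) - r) = (-1) ^ r * M.choose r := by
  rw [prod_erase_range_natCast_sub hr, div_eq_iff (by simp [Nat.factorial_ne_zero]),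
    ← Nat.choose_mul_factorial_mul_factorial hr]
  push_cast
  ring_nf
  simp

lemma sum_range_neg_one_pow_mul_choose_mul_pow {R : Type*} [CommRing R] (w : R) (M : ℕ) :
    ∑ r ∈ range (M + 1), (-1) ^ r * (M.choose r : R) * w ^ r = (1 - w) ^ M := by
  rw [sub_eq_neg_add, add_pow]
  refine sum_congr rfl fun r _ => ?_
  rw [neg_pow, one_pow, mul_one]
  ring

lemma one_sub_X_ne_zero {K : Type*} [Field K] : (1 : RatFunc K) - RatFunc.X ≠ 0 := by
  rw [← map_one (algebraMap K[X] (RatFunc K)), ← RatFunc.algebraMap_X, ← map_sub]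
  refine RatFunc.algebraMap_ne_zero ?_
  rw [← neg_sub, neg_ne_zero]
  simpa using Polynomial.X_sub_C_ne_zero (1 : K)

theorem sum_factorial_div_prod_erase_mul_zpow {K : Type*} [Field K] [CharZero K] {w : K}
    (hw : w ≠ 0) (hw1 : 1 - w ≠ 0) {M : ℕ} {N n : ℤ} (hM : (M : ℤ) = N - n) (y : ℤ) :
    ∑ r ∈ range (M + 1), (M ! : K) /
        ((∏ s ∈ (range (M + 1)).erase r, ((s : K) - r)) * (w ^ (y - r + 1) * (1 - w) ^ N)) =
      1 / (w ^ (y + 1) * (1 - w) ^ n) := by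
  have hterm : ∀ r ∈ range (M + 1), (M ! : K) /
      ((∏ s ∈ (range (M + 1)).erase r, ((s : K) - r)) * (w ^ (y - r + 1) * (1 - w) ^ N)) =
      (-1) ^ r * (M.choose r : K) * w ^ r / (w ^ (y + 1) * (1 - w) ^ N) := by
    intro r hr
    rw [← factorial_div_prod_erase_range_natCast_sub (mem_range_succ_iff.mp hr),
      show y - r + 1 = y + 1 - r by ring, zpow_sub₀ hw, zpow_natCast]
    have hP : ∏ s ∈ (range (M + 1)).erase r, ((s : K) - r) ≠ 0 :=
      prod_ne_zero_iff.mpr fun s hs => sub_ne_zero.mpr (by simpa using ne_of_mem_erase hs)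
    field_simp
  have hN : (1 - w) ^ N = (1 - w) ^ M * (1 - w) ^ n := by
    rw [← zpow_natCast, ← zpow_add₀ hw1, hM, sub_add_cancel]
  rw [sum_congr rfl hterm, ← sum_div, sum_range_neg_one_pow_mul_choose_mul_pow, hN]
  field_simp

theorem stmt1_general (N n y : ℤ) (hnN : n ≤ N) :
    let w : RatFunc ℚ := RatFunc.X
    let S : ℤ → ℤ → RatFunc ℚ := fun x k => w ^ (x + 1) * (1 - w) ^ k
    let M : ℕ := (N - n).toNat
    ∑ r ∈ Finset.range (M + 1),
        ((Nat.factorial M : RatFunc ℚ) /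
          ((∏ s ∈ (Finset.range (M + 1)).erase r, ((s : RatFunc ℚ) - (r : ℕ))) *
            S (y - r) N))
      = 1 / S y n :=
  sum_factorial_div_prod_erase_mul_zpow RatFunc.X_ne_zero one_sub_X_ne_zero
    (Int.toNat_of_nonneg (sub_nonneg.mpr hnN)) y

/-- With `S_x^{(k)}(w) = w^{x+1}(1−w)^k` in the field of rational functions `ℚ(w)`,
for integers `N ≥ n ≥ 0` and `y`:
`∑_{r=0}^{N−n} (N−n)! / ((∏_{s≠r}(s−r)) S_{y−r}^{(N)}(w)) = 1/S_y^{(n)}(w)`. -/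
theorem stmt1 (N n y : ℤ) (hn : 0 ≤ n) (hnN : n ≤ N) :
    let w : RatFunc ℚ := RatFunc.X
    let S : ℤ → ℤ → RatFunc ℚ := fun x k => w ^ (x + 1) * (1 - w) ^ k
    let M : ℕ := (N - n).toNat
    ∑ r ∈ Finset.range (M + 1),
        ((Nat.factorial M : RatFunc ℚ) /
          ((∏ s ∈ (Finset.range (M + 1)).erase r, ((s : RatFunc ℚ) - (r : ℕ))) *
            S (y - r) N))
      = 1 / S y n :=
  stmt1_general N n y hnN
end

section
/- Let m, n, x, y be integers and define K₀(m,x;n,y) = −((y−x+1)_{n−m−1}/(n−m−1)!) · 1_{n>m} · 1_{y≥x} (where the expression is 0 unless n > m and y ≥ x). Then K₀(m,x;n,y) − K₀(m,x;n+1,y) + K₀(m,x;n+1,y−1) = 1 if (m,x) = (n,y) and 0 otherwise. -/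
/-! `K₀(m,x;n,y) = -C(y-x+n-m-1, n-m-1)` on its support, so the identity is Pascal's rule
`C(a+k, k) = C(a+k-1, k-1) + C(a+k-1, k)` for `k = n - m`, `a = y - x`, with the boundary
`k = a = 0` contributing the `1`. -/

theorem ascPochhammer_eval_succ_div_factorial (a d : ℕ) :
    (((ascPochhammer ℤ d).eval ((a : ℤ) + 1) : ℤ) : ℚ) / d.factorial = (a + d).choose d := by
  have h := ascPochhammer_nat_eq_natCast_ascFactorial ℤ (a + 1) d
  rw [Nat.ascFactorial_eq_factorial_mul_choose, Nat.cast_succ] at h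
  rw [h, div_eq_iff (by exact_mod_cast d.factorial_ne_zero)]
  push_cast
  ring

def extChoose (k a : ℤ) : ℚ :=
  if 0 < k ∧ 0 ≤ a then ((a.toNat + (k - 1).toNat).choose (k - 1).toNat : ℚ) else 0

theorem extChoose_natCast_add_one (i j : ℕ) : extChoose ((i : ℤ) + 1) j = (j + i).choose i := by
  simp [extChoose]

theorem extChoose_of_nonpos_left {k : ℤ} (hk : k ≤ 0) (a : ℤ) : extChoose k a = 0 := by
  rw [extChoose, if_neg (by omega)]

theorem extChoose_of_neg_right (k : ℤ) {a : ℤ} (ha : a < 0) : extChoose k a = 0 := by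
  rw [extChoose, if_neg (by omega)]

theorem extChoose_one (a : ℤ) : extChoose 1 a = if 0 ≤ a then 1 else 0 := by
  simp [extChoose]

theorem extChoose_zero_right (k : ℤ) : extChoose k 0 = if 0 < k then 1 else 0 := by
  simp [extChoose]

theorem extChoose_add_one (k a : ℤ) :
    extChoose (k + 1) a = extChoose k a + extChoose (k + 1) (a - 1) +
      if k = 0 ∧ a = 0 then 1 else 0 := by
  rcases lt_trichotomy k 0 with hk | rfl | hk
  · rw [extChoose_of_nonpos_left (by omega), extChoose_of_nonpos_left (by omega),
      extChoose_of_nonpos_left (by omega), if_neg (by omega)]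
    simp
  · rw [zero_add, extChoose_one, extChoose_one, extChoose_of_nonpos_left le_rfl]
    split_ifs <;> first | omega | norm_num
  rcases lt_trichotomy a 0 with ha | rfl | ha
  · rw [extChoose_of_neg_right _ ha, extChoose_of_neg_right _ ha,
      extChoose_of_neg_right _ (by omega), if_neg (by omega)]
    simp
  · rw [extChoose_zero_right, extChoose_zero_right, extChoose_of_neg_right _ (by norm_num),
      if_pos (by omega), if_pos hk, if_neg (by omega)]
    simp
  obtain ⟨i, rfl⟩ : ∃ i : ℕ, k = i + 1 := ⟨(k - 1).toNat, by omega⟩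
  obtain ⟨j, rfl⟩ : ∃ j : ℕ, a = j + 1 := ⟨(a - 1).toNat, by omega⟩
  have h₁ := extChoose_natCast_add_one (i + 1) (j + 1)
  have h₂ := extChoose_natCast_add_one i (j + 1)
  have h₃ := extChoose_natCast_add_one (i + 1) j
  push_cast at h₁ h₂ h₃
  rw [add_sub_cancel_right, h₁, h₂, h₃, if_neg (by omega),
    show j + 1 + (i + 1) = j + i + 1 + 1 by ring, Nat.choose_succ_succ,
    show j + 1 + i = j + i + 1 by ring, show j + (i + 1) = j + i + 1 by ring]
  push_cast
  ring

/-- With `K₀(m,x;n,y) = −((y−x+1)_{n−m−1}/(n−m−1)!)·1_{n>m}·1_{y≥x}`,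
one has `K₀(m,x;n,y) − K₀(m,x;n+1,y) + K₀(m,x;n+1,y−1) = 1_{(m,x)=(n,y)}`. -/
theorem stmt3 (m x n y : ℤ) :
    let K₀ : ℤ → ℤ → ℤ → ℤ → ℚ := fun m x n y =>
      -(if m < n ∧ x ≤ y then
          (((ascPochhammer ℤ (n - m - 1).toNat).eval (y - x + 1) : ℤ) : ℚ) /
            (Nat.factorial (n - m - 1).toNat : ℚ)
        else 0)
    K₀ m x n y - K₀ m x (n + 1) y + K₀ m x (n + 1) (y - 1)
      = if (m, x) = (n, y) then 1 else 0 := by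
  intro K₀
  have hK : ∀ n y, K₀ m x n y = -extChoose (n - m) (y - x) := by
    intro n y
    simp only [K₀, extChoose]
    by_cases h : m < n ∧ x ≤ y
    · rw [if_pos h, if_pos (by omega), ← ascPochhammer_eval_succ_div_factorial,
        Int.toNat_of_nonneg (by omega), sub_right_comm n m]
    · rw [if_neg h, if_neg (by omega)]
  rw [hK, hK, hK, show n + 1 - m = n - m + 1 by ring, show y - 1 - x = y - x - 1 by ring,
    extChoose_add_one]
  simp only [Prod.mk.injEq]
  split_ifs <;> first | omega | ring
end
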